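/- In the isotropic case, define D_{mn}(k) := (D̄_0(|k|)/H0'(|k|))·(δ_{mn} − k_m k_n/|k|²) and χ_j(k) := (H0'(|k|))²·|k|²·k̂_j / ((d−1)·D̄_0(|k|)) for k ∈ ℝ^d∖{0}. Then: (i) Σ_{m,n} ∂_{k_m}( D_{mn}(k) ∂_{k_n} χ_j )(k) = −H0'(|k|)·k̂_j, (ii) χ_j has zero mean over each sphere {|k| = const}, and (iii) the resulting spatial diffusion matrix a_{nm}(k) := (1/Γ_{d−1}) ∫_{S^{d−1}} H0'(k) k̂_n χ_m(k k̂) dΩ(k̂) equals ( (H0'(k))³ k² / (d(d−1) D̄_0(k)) )·δ_{nm}. -/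

import Mathlib

open MeasureTheory
open scoped ENNReal NNReal

variable {d : ℕ}


lemma sum_sq_eq (x : EuclideanSpace ℝ (Fin d)) : ∑ i, x i ^ 2 = ‖x‖ ^ 2 := by
  rw [EuclideanSpace.norm_eq, Real.sq_sqrt (by positivity)]
  simp [Real.norm_eq_abs, sq_abs]

lemma abs_coord_le (x : EuclideanSpace ℝ (Fin d)) (i : Fin d) : |x i| ≤ ‖x‖ := by
  rw [EuclideanSpace.norm_eq]
  calc |x i| = Real.sqrt ((x i)^2) := (Real.sqrt_sq_eq_abs _).symm
  _ ≤ _ := by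
      apply Real.sqrt_le_sqrt
      apply Finset.single_le_sum (f := fun j => ‖x j‖^2) (fun j _ => by positivity) (Finset.mem_univ i) |>.trans_eq' ?_
      simp [Real.norm_eq_abs, sq_abs]

lemma hasFDerivAt_norm' {x : EuclideanSpace ℝ (Fin d)} (hx : x ≠ 0) :
    HasFDerivAt (fun y : EuclideanSpace ℝ (Fin d) => ‖y‖) (‖x‖⁻¹ • (innerSL ℝ x)) x := by
  have h2 : HasFDerivAt (fun y : EuclideanSpace ℝ (Fin d) => ‖y‖^2) ((2:ℝ) • (innerSL ℝ x)) x := by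
    have := (hasStrictFDerivAt_norm_sq x).hasFDerivAt
    refine this.congr_fderiv ?_
    module
  have hs : HasDerivAt Real.sqrt (1 / (2 * Real.sqrt (‖x‖^2))) (‖x‖^2) :=
    Real.hasDerivAt_sqrt (pow_pos (norm_pos_iff.2 hx) 2).ne'
  have := hs.comp_hasFDerivAt x h2
  have hnx : ‖x‖ ≠ 0 := norm_ne_zero_iff.2 hx
  have e : (Real.sqrt ∘ fun y : EuclideanSpace ℝ (Fin d) => ‖y‖^2) = fun y => ‖y‖ := by
    funext y; simp [Function.comp, Real.sqrt_sq (norm_nonneg y)]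
  rw [e] at this
  refine this.congr_fderiv ?_
  · rw [smul_smul, Real.sqrt_sq (norm_nonneg x)]
    congr 1
    field_simp

lemma innerSL_single (x : EuclideanSpace ℝ (Fin d)) (n : Fin d) :
    (innerSL ℝ x) (EuclideanSpace.single n 1) = x n := by
  simp [PiLp.inner_apply, EuclideanSpace.single_apply, RCLike.inner_apply]

lemma hasFDerivAt_coord (x : EuclideanSpace ℝ (Fin d)) (a : Fin d) :
    HasFDerivAt (fun y : EuclideanSpace ℝ (Fin d) => y a) (EuclideanSpace.proj a : _ →L[ℝ] ℝ) x := by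
  have := (EuclideanSpace.proj (𝕜 := ℝ) a).hasFDerivAt (x := x)
  convert this using 1
  rfl

lemma hasFDerivAt_radial_mul {g : ℝ → ℝ} {g' : ℝ} {x : EuclideanSpace ℝ (Fin d)} (hx : x ≠ 0)
    (hg : HasDerivAt g g' ‖x‖) {f : EuclideanSpace ℝ (Fin d) → ℝ} {f' : EuclideanSpace ℝ (Fin d) →L[ℝ] ℝ}
    (hf : HasFDerivAt f f' x) :
    HasFDerivAt (fun y => g ‖y‖ * f y)
      (g ‖x‖ • f' + f x • (g' • (‖x‖⁻¹ • (innerSL ℝ x)))) x :=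
  HasFDerivAt.mul (hg.comp_hasFDerivAt x (hasFDerivAt_norm' hx)) hf

lemma part_i (d : ℕ) (hd : 2 ≤ d)
    (H0' D0bar : ℝ → ℝ)
    (hH0' : ContDiffOn ℝ 1 H0' (Set.Ioi 0)) (hD0 : ContDiffOn ℝ 1 D0bar (Set.Ioi 0))
    (hH0'pos : ∀ k > (0:ℝ), 0 < H0' k) (hD0ne : ∀ k > (0:ℝ), D0bar k ≠ 0)
    (D : Fin d → Fin d → EuclideanSpace ℝ (Fin d) → ℝ)
    (hD : ∀ (m n : Fin d) (k : EuclideanSpace ℝ (Fin d)),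
      D m n k = (D0bar ‖k‖ / H0' ‖k‖) *
        ((if m = n then (1:ℝ) else 0) - k m * k n / ‖k‖ ^ 2))
    (χ : Fin d → EuclideanSpace ℝ (Fin d) → ℝ)
    (hχ : ∀ (j : Fin d) (k : EuclideanSpace ℝ (Fin d)),
      χ j k = (H0' ‖k‖) ^ 2 * ‖k‖ ^ 2 * (k j / ‖k‖) / (((d : ℝ) - 1) * D0bar ‖k‖))
    (j : Fin d) (k : EuclideanSpace ℝ (Fin d)) (hk : k ≠ 0) :
    ∑ m : Fin d, fderiv ℝ (fun k' => ∑ n : Fin d,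
        D m n k' * fderiv ℝ (χ j) k' (EuclideanSpace.single n 1)) k
      (EuclideanSpace.single m 1) = -(H0' ‖k‖ * (k j / ‖k‖)) := by
  have hd1 : ((d:ℝ) - 1) ≠ 0 := by
    have h2 : (2:ℝ) ≤ (d:ℝ) := by exact_mod_cast hd
    nlinarith
  have hH0'at : ∀ r > (0:ℝ), DifferentiableAt ℝ H0' r := fun r hr =>
    ((hH0' r hr).contDiffAt (Ioi_mem_nhds hr)).differentiableAt one_ne_zero
  have hD0at : ∀ r > (0:ℝ), DifferentiableAt ℝ D0bar r := fun r hr =>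
    ((hD0 r hr).contDiffAt (Ioi_mem_nhds hr)).differentiableAt one_ne_zero
  set A : ℝ → ℝ := fun r => (H0' r)^2 * r^2 / (r * (((d:ℝ)-1) * D0bar r)) with hA
  have hAat : ∀ r, 0 < r → DifferentiableAt ℝ A r := by
    intro r hr
    exact (((hH0'at r hr).pow 2).mul (differentiableAt_fun_id.pow 2)).div
      (differentiableAt_fun_id.mul ((differentiableAt_const _).mul (hD0at r hr)))
      (mul_ne_zero hr.ne' (mul_ne_zero hd1 (hD0ne r hr)))
  -- χ in radial form
  have hχeq : ∀ y : EuclideanSpace ℝ (Fin d), y ≠ 0 → χ j y = A ‖y‖ * y j := by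
    intro y hy
    have hry : (0:ℝ) < ‖y‖ := norm_pos_iff.2 hy
    have hD0y := hD0ne ‖y‖ hry
    rw [hχ]
    simp only [hA]
    field_simp
  -- directional derivatives of χ
  have hχfd : ∀ (y : EuclideanSpace ℝ (Fin d)), y ≠ 0 → ∀ n,
      fderiv ℝ (χ j) y (EuclideanSpace.single n 1)
        = A ‖y‖ * (if j = n then 1 else 0) + y j * (deriv A ‖y‖ * (y n / ‖y‖)) := by
    intro y hy n
    have hry : (0:ℝ) < ‖y‖ := norm_pos_iff.2 hy
    have hF : HasFDerivAt (fun z : EuclideanSpace ℝ (Fin d) => A ‖z‖ * z j)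
        (A ‖y‖ • (EuclideanSpace.proj j : _ →L[ℝ] ℝ)
          + y j • (deriv A ‖y‖ • (‖y‖⁻¹ • innerSL ℝ y))) y :=
      hasFDerivAt_radial_mul hy ((hAat _ hry).hasDerivAt) (hasFDerivAt_coord y j)
    have hEq : χ j =ᶠ[nhds y] fun z => A ‖z‖ * z j := by
      filter_upwards [eventually_ne_nhds hy] with z hz using hχeq z hz
    rw [(hF.congr_of_eventuallyEq hEq).fderiv]
    simp only [ContinuousLinearMap.add_apply, ContinuousLinearMap.smul_apply, smul_eq_mul,
      innerSL_single, PiLp.proj_apply, EuclideanSpace.single_apply]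
    ring
  set c : ℝ → ℝ := fun r => H0' r * r / ((d:ℝ)-1) with hc
  -- closed form of the inner function
  have hinner : ∀ (m : Fin d) (y : EuclideanSpace ℝ (Fin d)), y ≠ 0 →
      (∑ n : Fin d, D m n y * fderiv ℝ (χ j) y (EuclideanSpace.single n 1))
        = (if m = j then (1:ℝ) else 0) * c ‖y‖ - (c ‖y‖ / ‖y‖^2) * (y m * y j) := by
    intro m y hy
    have hry : (0:ℝ) < ‖y‖ := norm_pos_iff.2 hy
    have hD0y := hD0ne ‖y‖ hry
    have hH0y := (hH0'pos ‖y‖ hry).ne'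
    have step1 : ∀ n, D m n y * fderiv ℝ (χ j) y (EuclideanSpace.single n 1)
        = A ‖y‖ * (D m n y * (if j = n then (1:ℝ) else 0))
          + (y j * deriv A ‖y‖ / ‖y‖) * (D m n y * y n) := by
      intro n; rw [hχfd y hy n]; ring
    rw [Finset.sum_congr rfl fun n _ => step1 n, Finset.sum_add_distrib,
      ← Finset.mul_sum, ← Finset.mul_sum]
    have hs1 : (∑ n : Fin d, D m n y * (if j = n then (1:ℝ) else 0)) = D m j y := by simp
    have hs2 : (∑ n : Fin d, D m n y * y n) = 0 := by
      have e1 : ∀ n, D m n y * y n = (D0bar ‖y‖ / H0' ‖y‖) *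
          ((if m = n then (1:ℝ) else 0) * y n) -
          ((D0bar ‖y‖ / H0' ‖y‖) * (y m / ‖y‖^2)) * (y n * y n) := by
        intro n; rw [hD]; ring
      rw [Finset.sum_congr rfl fun n _ => e1 n, Finset.sum_sub_distrib,
        ← Finset.mul_sum, ← Finset.mul_sum]
      have e2 : (∑ n : Fin d, (if m = n then (1:ℝ) else 0) * y n) = y m := by simp
      have e3 : (∑ n : Fin d, y n * y n) = ‖y‖^2 := by
        rw [← sum_sq_eq y]; exact Finset.sum_congr rfl fun i _ => (pow_two _).symm
      rw [e2, e3]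
      field_simp
      ring
    rw [hs1, hs2, hD]
    simp only [hA, hc, mul_zero, add_zero]
    generalize (if m = j then (1:ℝ) else 0) = delta
    field_simp
  -- now the outer derivative
  have hr : (0:ℝ) < ‖k‖ := norm_pos_iff.2 hk
  have hcat : HasDerivAt c (deriv c ‖k‖) ‖k‖ := by
    have : DifferentiableAt ℝ c ‖k‖ := by
      rw [hc]; exact ((hH0'at _ hr).mul differentiableAt_fun_id).div_const _
    exact this.hasDerivAt
  have hc2at : HasDerivAt (fun ρ => c ρ / ρ^2)
      ((deriv c ‖k‖ * ‖k‖^2 - c ‖k‖ * (2 * ‖k‖^1)) / (‖k‖^2)^2) ‖k‖ :=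
    hcat.div (hasDerivAt_pow 2 ‖k‖) (by positivity)
  have hfd : ∀ m : Fin d, fderiv ℝ (fun k' => ∑ n : Fin d,
      D m n k' * fderiv ℝ (χ j) k' (EuclideanSpace.single n 1)) k
      = (if m = j then (1:ℝ) else 0) • (deriv c ‖k‖ • (‖k‖⁻¹ • innerSL ℝ k))
        - ((c ‖k‖ / ‖k‖^2) • (k m • (EuclideanSpace.proj j : _ →L[ℝ] ℝ)
            + k j • (EuclideanSpace.proj m : _ →L[ℝ] ℝ))
          + (k m * k j) • (((deriv c ‖k‖ * ‖k‖^2 - c ‖k‖ * (2 * ‖k‖^1)) / (‖k‖^2)^2)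
              • (‖k‖⁻¹ • innerSL ℝ k))) := by
    intro m
    have hG : HasFDerivAt (fun y : EuclideanSpace ℝ (Fin d) =>
        (if m = j then (1:ℝ) else 0) * c ‖y‖ - (c ‖y‖ / ‖y‖^2) * (y m * y j)) _ k :=
      HasFDerivAt.sub
        ((hcat.comp_hasFDerivAt k (hasFDerivAt_norm' hk)).const_mul _)
        (hasFDerivAt_radial_mul hk hc2at ((hasFDerivAt_coord k m).mul (hasFDerivAt_coord k j)))
    have hEqm : (fun k' => ∑ n : Fin d,
        D m n k' * fderiv ℝ (χ j) k' (EuclideanSpace.single n 1)) =ᶠ[nhds k]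
        (fun y => (if m = j then (1:ℝ) else 0) * c ‖y‖ - (c ‖y‖ / ‖y‖^2) * (y m * y j)) := by
      filter_upwards [eventually_ne_nhds hk] with z hz using hinner m z hz
    exact (hG.congr_of_eventuallyEq hEqm).fderiv
  -- evaluate and sum
  have heval : ∀ m : Fin d, fderiv ℝ (fun k' => ∑ n : Fin d,
      D m n k' * fderiv ℝ (χ j) k' (EuclideanSpace.single n 1)) k (EuclideanSpace.single m 1)
      = (deriv c ‖k‖ * ‖k‖⁻¹) * ((if m = j then (1:ℝ) else 0) * k m)
        - (c ‖k‖ / ‖k‖^2) * ((if j = m then (1:ℝ) else 0) * k m)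
        - (c ‖k‖ / ‖k‖^2) * k j
        - (((deriv c ‖k‖ * ‖k‖^2 - c ‖k‖ * (2 * ‖k‖^1)) / (‖k‖^2)^2) * ‖k‖⁻¹ * k j)
            * (k m * k m) := by
    intro m
    rw [hfd m]
    simp only [ContinuousLinearMap.sub_apply, ContinuousLinearMap.add_apply,
      ContinuousLinearMap.smul_apply, smul_eq_mul, innerSL_single, PiLp.proj_apply,
      EuclideanSpace.single_apply, eq_self_iff_true, if_true]
    ring
  rw [Finset.sum_congr rfl fun m _ => heval m]
  rw [Finset.sum_sub_distrib, Finset.sum_sub_distrib, Finset.sum_sub_distrib,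
    ← Finset.mul_sum, ← Finset.mul_sum, ← Finset.mul_sum]
  have s0 : (∑ m : Fin d, (if m = j then (1:ℝ) else 0) * k m) = k j := by simp
  have s2 : (∑ m : Fin d, (if j = m then (1:ℝ) else 0) * k m) = k j := by simp
  have s3 : (∑ m : Fin d, k m * k m) = ‖k‖^2 := by
    rw [← sum_sq_eq k]; exact Finset.sum_congr rfl fun i _ => (pow_two _).symm
  rw [s0, s2, Finset.sum_const, Finset.card_univ, Fintype.card_fin, nsmul_eq_mul,
    ← Finset.mul_sum, s3]
  simp only [hc]
  field_simp
  ring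

lemma sphere_integral_comp (d : ℕ) (s ρ : ℝ)
    (L : EuclideanSpace ℝ (Fin d) ≃ₗᵢ[ℝ] EuclideanSpace ℝ (Fin d))
    (f : EuclideanSpace ℝ (Fin d) → ℝ) :
    ∫ u in Metric.sphere (0 : EuclideanSpace ℝ (Fin d)) ρ, f u ∂μH[s]
      = ∫ u in Metric.sphere (0 : EuclideanSpace ℝ (Fin d)) ρ, f (L u) ∂μH[s] := by
  have hmp : MeasurePreserving L.toIsometryEquiv μH[s] μH[s] :=
    L.toIsometryEquiv.measurePreserving_hausdorffMeasure s
  have hpre : (⇑L.toIsometryEquiv) ⁻¹' Metric.sphere (0 : EuclideanSpace ℝ (Fin d)) ρ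
      = Metric.sphere 0 ρ := by
    ext x
    simp [mem_sphere_zero_iff_norm]
  have h := (hmp.restrict_preimage (Metric.isClosed_sphere (x := (0 : EuclideanSpace ℝ (Fin d))) (ε := ρ)).measurableSet).integral_comp
    (L.toIsometryEquiv.toHomeomorph.measurableEmbedding) f
  rw [hpre] at h
  rw [← h]
  rfl

lemma part_ii (d : ℕ) (H0' D0bar : ℝ → ℝ)
    (χ : Fin d → EuclideanSpace ℝ (Fin d) → ℝ)
    (hχ : ∀ (j : Fin d) (k : EuclideanSpace ℝ (Fin d)),
      χ j k = (H0' ‖k‖) ^ 2 * ‖k‖ ^ 2 * (k j / ‖k‖) / (((d : ℝ) - 1) * D0bar ‖k‖))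
    (j : Fin d) (ρ : ℝ) :
    ∫ u in Metric.sphere (0 : EuclideanSpace ℝ (Fin d)) ρ, χ j u ∂μH[(d:ℝ)-1] = 0 := by
  have hodd : ∀ u : EuclideanSpace ℝ (Fin d), χ j (-u) = - χ j u := by
    intro u
    rw [hχ, hχ, norm_neg]
    have h1 : (-u) j = -(u j) := rfl
    rw [h1]
    ring
  have h := sphere_integral_comp d ((d:ℝ)-1) ρ (LinearIsometryEquiv.neg ℝ) (χ j)
  simp only [LinearIsometryEquiv.coe_neg, hodd, integral_neg] at h
  linarith

lemma sphere_hd_pos (e : ℕ) :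
    0 < μH[((e+1 : ℕ) : ℝ)] (Metric.sphere (0 : EuclideanSpace ℝ (Fin (e+2))) 1) := by
  classical
  set f : EuclideanSpace ℝ (Fin (e+2)) → (Fin (e+1) → ℝ) :=
    fun u i => u i.castSucc with hf
  have hlip : LipschitzWith 1 f := by
    apply LipschitzWith.of_dist_le_mul
    intro x y
    rw [NNReal.coe_one, one_mul]
    refine (dist_pi_le_iff dist_nonneg).2 fun i => ?_
    have h1 : |(x - y) i.castSucc| ≤ ‖x - y‖ := abs_coord_le _ _
    have h2 : (x - y) i.castSucc = x i.castSucc - y i.castSucc := rfl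
    rw [h2] at h1
    simpa [Real.dist_eq, dist_eq_norm] using h1
  have hsub : Metric.ball (0 : Fin (e+1) → ℝ) ((1:ℝ)/(e+1))
      ⊆ f '' (Metric.sphere (0 : EuclideanSpace ℝ (Fin (e+2))) 1) := by
    intro y hy
    have hyc : ∀ i, |y i| ≤ 1/(e+1) := by
      intro i
      have h1 := dist_le_pi_dist y 0 i
      have h2 : dist y 0 < 1/(e+1) := Metric.mem_ball.1 hy
      have : dist (y i) 0 ≤ 1/(e+1) := le_of_lt (lt_of_le_of_lt h1 h2)
      simpa [Real.dist_eq] using this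
    have hsum : ∑ i, (y i)^2 ≤ 1 := by
      have h1 : ∀ i : Fin (e+1), (y i)^2 ≤ (1/(e+1))^2 := by
        intro i
        rw [← sq_abs]
        exact pow_le_pow_left₀ (abs_nonneg _) (hyc i) 2
      calc ∑ i, (y i)^2 ≤ ∑ _i : Fin (e+1), ((1:ℝ)/(e+1))^2 :=
            Finset.sum_le_sum fun i _ => h1 i
        _ = (e+1) * ((1:ℝ)/(e+1))^2 := by
            rw [Finset.sum_const, Finset.card_univ, Fintype.card_fin, nsmul_eq_mul]
            push_cast; ring
        _ ≤ 1 := by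
            have he : (0:ℝ) < (e:ℝ)+1 := by positivity
            rw [div_pow, one_pow, mul_one_div, div_le_one (by positivity)]
            nlinarith
    set t := Real.sqrt (1 - ∑ i, (y i)^2) with ht
    have ht2 : t^2 = 1 - ∑ i, (y i)^2 := Real.sq_sqrt (by linarith)
    set X : EuclideanSpace ℝ (Fin (e+2)) :=
      (WithLp.equiv 2 (Fin (e+2) → ℝ)).symm (Fin.snoc y t) with hX
    have hXapp : ∀ i : Fin (e+2), X i = (Fin.snoc y t : Fin (e+2) → ℝ) i := fun i => rfl
    have hXnorm : ‖X‖ = 1 := by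
      rw [EuclideanSpace.norm_eq]
      have : ∑ i : Fin (e+2), ‖X i‖^2 = 1 := by
        simp only [hXapp, Real.norm_eq_abs, sq_abs]
        rw [Fin.sum_univ_castSucc]
        simp only [Fin.snoc_castSucc, Fin.snoc_last]
        rw [ht2]; ring
      rw [this, Real.sqrt_one]
    refine ⟨X, mem_sphere_zero_iff_norm.2 hXnorm, ?_⟩
    funext i
    simp only [hf, hXapp, Fin.snoc_castSucc]
  have hvol : (0:ℝ≥0∞) < μH[((e+1:ℕ):ℝ)] (Metric.ball (0 : Fin (e+1) → ℝ) ((1:ℝ)/(e+1))) := by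
    rw [show (((e+1:ℕ):ℝ)) = ((Fintype.card (Fin (e+1)) : ℕ) : ℝ) by simp,
      hausdorffMeasure_pi_real]
    exact Metric.measure_ball_pos _ _ (by positivity)
  refine lt_of_lt_of_le hvol (le_trans (measure_mono hsub) ?_)
  have := hlip.hausdorffMeasure_image_le
    (show (0:ℝ) ≤ ((e+1:ℕ):ℝ) by positivity)
    (Metric.sphere (0 : EuclideanSpace ℝ (Fin (e+2))) 1)
  simpa using this

lemma sphere_hd_fin (e : ℕ) :
    μH[((e+1 : ℕ) : ℝ)] (Metric.sphere (0 : EuclideanSpace ℝ (Fin (e+2))) 1) < ⊤ := by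
  classical
  have hs0 : (0:ℝ) ≤ ((e+1:ℕ):ℝ) := by positivity
  set g : EuclideanSpace ℝ (Fin (e+2)) → EuclideanSpace ℝ (Fin (e+2)) :=
    fun x => ‖x‖⁻¹ • x with hg
  set Sbig : Set (EuclideanSpace ℝ (Fin (e+2))) := {x | 1 ≤ ‖x‖} with hSbig
  have hglip : LipschitzOnWith 2 g Sbig := by
    apply LipschitzOnWith.of_dist_le_mul
    intro x hx y hy
    have hax : (0:ℝ) < ‖x‖ := lt_of_lt_of_le one_pos hx
    have hay : (0:ℝ) < ‖y‖ := lt_of_lt_of_le one_pos hy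
    have key : g x - g y = ‖x‖⁻¹ • (x - y) + (‖x‖⁻¹ - ‖y‖⁻¹) • y := by
      simp only [hg]; module
    have h1 : ‖‖x‖⁻¹ • (x-y)‖ ≤ ‖x - y‖ := by
      rw [norm_smul, Real.norm_eq_abs, abs_of_pos (inv_pos.2 hax)]
      have hle : ‖x‖⁻¹ ≤ 1 := by
        rw [inv_le_one_iff₀]; right; exact hx
      nlinarith [norm_nonneg (x - y)]
    have h2 : ‖(‖x‖⁻¹ - ‖y‖⁻¹) • y‖ ≤ ‖x - y‖ := by
      rw [norm_smul, Real.norm_eq_abs]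
      have hdif : ‖x‖⁻¹ - ‖y‖⁻¹ = (‖y‖ - ‖x‖)/(‖x‖ * ‖y‖) := by field_simp
      rw [hdif, abs_div, abs_of_pos (mul_pos hax hay)]
      have h3 : |‖y‖ - ‖x‖| ≤ ‖x - y‖ := by
        rw [abs_sub_comm]; exact abs_norm_sub_norm_le x y
      have h4 : |‖y‖-‖x‖|/(‖x‖*‖y‖)*‖y‖ = |‖y‖-‖x‖|/‖x‖ := by field_simp
      rw [h4]
      have h5 : |‖y‖-‖x‖|/‖x‖ ≤ |‖y‖-‖x‖| := div_le_self (abs_nonneg _) hx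
      linarith
    calc dist (g x) (g y) = ‖g x - g y‖ := dist_eq_norm _ _
      _ = ‖‖x‖⁻¹ • (x-y) + (‖x‖⁻¹-‖y‖⁻¹) • y‖ := by rw [key]
      _ ≤ ‖‖x‖⁻¹ • (x-y)‖ + ‖(‖x‖⁻¹-‖y‖⁻¹) • y‖ := norm_add_le _ _
      _ ≤ ‖x-y‖ + ‖x-y‖ := add_le_add h1 h2
      _ ≤ (2:NNReal) * dist x y := by rw [dist_eq_norm]; push_cast; ring_nf; rfl
  set v : Bool → ℝ := fun b => if b then 1 else -1 with hv
  set F : Fin (e+2) → Bool → Set (EuclideanSpace ℝ (Fin (e+2))) :=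
    fun i b => {x | x i = v b ∧ ∀ j, |x j| ≤ 1} with hF
  have hface : ∀ i b, μH[((e+1:ℕ):ℝ)] (F i b) < ⊤ := by
    intro i b
    set h : (Fin (e+1) → ℝ) → EuclideanSpace ℝ (Fin (e+2)) :=
      fun y => (WithLp.equiv 2 (Fin (e+2) → ℝ)).symm (Fin.insertNth i (v b) y) with hh
    have happ : ∀ (y : Fin (e+1) → ℝ) (j : Fin (e+2)),
        h y j = (Fin.insertNth (α := fun _ => ℝ) i (v b) y) j := fun y j => rfl
    have hhl : LipschitzWith ((e:ℝ≥0)+2) h := by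
      apply LipschitzWith.of_dist_le_mul
      intro y y'
      rw [EuclideanSpace.dist_eq]
      have hsum : ∑ j : Fin (e+2), dist (h y j) (h y' j)^2
          = ∑ kk : Fin (e+1), dist (y kk) (y' kk)^2 := by
        rw [Fin.sum_univ_succAbove _ i]
        simp only [happ, Fin.insertNth_apply_same, Fin.insertNth_apply_succAbove]
        simp
      rw [hsum]
      have hb : ∑ kk : Fin (e+1), dist (y kk) (y' kk)^2 ≤ (((e:ℝ)+2) * dist y y')^2 := by
        have h1 : ∀ kk : Fin (e+1), dist (y kk) (y' kk)^2 ≤ dist y y'^2 := fun kk =>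
          pow_le_pow_left₀ dist_nonneg (dist_le_pi_dist y y' kk) 2
        calc ∑ kk : Fin (e+1), dist (y kk) (y' kk)^2
            ≤ ∑ _kk : Fin (e+1), dist y y'^2 := Finset.sum_le_sum fun kk _ => h1 kk
          _ = ((e:ℝ)+1) * dist y y'^2 := by
              rw [Finset.sum_const, Finset.card_univ, Fintype.card_fin, nsmul_eq_mul]
              push_cast; ring
          _ ≤ (((e:ℝ)+2) * dist y y')^2 := by nlinarith [dist_nonneg (x := y) (y := y')]
      calc Real.sqrt (∑ kk : Fin (e+1), dist (y kk) (y' kk)^2)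
          ≤ Real.sqrt ((((e:ℝ)+2) * dist y y')^2) := Real.sqrt_le_sqrt hb
        _ = ((e:ℝ)+2) * dist y y' := Real.sqrt_sq (by positivity)
        _ = ((e:ℝ≥0)+2 : ℝ≥0) * dist y y' := by push_cast; ring
    have hFsub : F i b ⊆ h '' (Metric.closedBall (0 : Fin (e+1) → ℝ) 1) := by
      intro x hx
      obtain ⟨hxi, hxj⟩ := hx
      refine ⟨i.removeNth (fun j => x j), ?_, ?_⟩
      · refine Metric.mem_closedBall.2 ((dist_pi_le_iff zero_le_one).2 fun kk => ?_)
        have : dist (x (i.succAbove kk)) 0 = |x (i.succAbove kk)| := by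
          rw [Real.dist_eq, sub_zero]
        rw [Fin.removeNth]
        simp only [Pi.zero_apply]
        rw [this]
        exact hxj _
      · have hins : Fin.insertNth i (v b) (i.removeNth fun j => x j) = fun j => x j := by
          rw [← hxi]
          exact Fin.insertNth_self_removeNth i _
        show (WithLp.equiv 2 (Fin (e+2) → ℝ)).symm (Fin.insertNth i (v b) (i.removeNth fun j => x j)) = x
        rw [hins]
        rfl
    have himg := hhl.hausdorffMeasure_image_le hs0 (Metric.closedBall (0 : Fin (e+1) → ℝ) 1)
    have hC : μH[((e+1:ℕ):ℝ)] (Metric.closedBall (0 : Fin (e+1) → ℝ) 1) < ⊤ := by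
      rw [show (((e+1:ℕ):ℝ)) = ((Fintype.card (Fin (e+1)) : ℕ) : ℝ) by simp,
        hausdorffMeasure_pi_real]
      exact (isCompact_closedBall _ _).measure_lt_top
    calc μH[((e+1:ℕ):ℝ)] (F i b) ≤ μH[((e+1:ℕ):ℝ)] (h '' (Metric.closedBall 0 1)) :=
          measure_mono hFsub
      _ ≤ (((e:ℝ≥0)+2 : ℝ≥0) : ℝ≥0∞) ^ ((e+1:ℕ):ℝ) * μH[((e+1:ℕ):ℝ)] (Metric.closedBall 0 1) := himg
      _ < ⊤ := ENNReal.mul_lt_top (ENNReal.rpow_lt_top_of_nonneg hs0 ENNReal.coe_ne_top) hC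
  have hFS : ∀ i b, F i b ⊆ Sbig := by
    intro i b x hx
    have hxi2 : (x i)^2 = 1 := by
      rw [hx.1]; cases b <;> simp [hv]
    have h1 : (1:ℝ) ≤ ‖x‖^2 := by
      rw [← sum_sq_eq x]
      calc (1:ℝ) = (x i)^2 := hxi2.symm
        _ ≤ ∑ j, (x j)^2 := Finset.single_le_sum (f := fun j => (x j)^2)
              (fun j _ => sq_nonneg _) (Finset.mem_univ i)
    show (1:ℝ) ≤ ‖x‖
    nlinarith [norm_nonneg x]
  have hcover : Metric.sphere (0 : EuclideanSpace ℝ (Fin (e+2))) 1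
      ⊆ ⋃ (p : Fin (e+2) × Bool), g '' (F p.1 p.2) := by
    intro u hu
    have hun : ‖u‖ = 1 := mem_sphere_zero_iff_norm.1 hu
    obtain ⟨i, -, hi⟩ := Finset.exists_max_image Finset.univ (fun j : Fin (e+2) => |u j|)
      ⟨0, Finset.mem_univ 0⟩
    have hipos : 0 < |u i| := by
      rcases (abs_nonneg (u i)).lt_or_eq with h|h
      · exact h
      · exfalso
        have hall : ∀ j, u j = 0 := fun j =>
          abs_eq_zero.1 (le_antisymm (le_trans (hi j (Finset.mem_univ j)) h.symm.le) (abs_nonneg _))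
        have : ‖u‖^2 = 0 := by
          rw [← sum_sq_eq u]
          exact Finset.sum_eq_zero fun j _ => by rw [hall j]; ring
        rw [hun] at this; norm_num at this
    set b : Bool := decide (0 < u i) with hb
    set x : EuclideanSpace ℝ (Fin (e+2)) := |u i|⁻¹ • u with hx
    have hxapp : ∀ j, x j = |u i|⁻¹ * u j := fun j => rfl
    refine Set.mem_iUnion.2 ⟨(i, b), ⟨x, ⟨?_, ?_⟩, ?_⟩⟩
    · show x i = v b
      rw [hxapp, hv, hb]
      rcases lt_trichotomy (u i) 0 with h|h|h
      · rw [abs_of_neg h]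
        simp only [decide_eq_true_eq]
        rw [if_neg (by linarith)]
        field_simp
        rw [div_self h.ne]
      · exfalso; rw [h] at hipos; simp at hipos
      · rw [abs_of_pos h]
        simp only [decide_eq_true_eq]
        rw [if_pos h]
        field_simp
    · intro j
      rw [hxapp, abs_mul, abs_of_pos (inv_pos.2 hipos)]
      rw [inv_mul_le_iff₀ hipos, mul_one]
      exact hi j (Finset.mem_univ j)
    · show g x = u
      have hxn : ‖x‖ = |u i|⁻¹ := by
        rw [hx, norm_smul, Real.norm_eq_abs, abs_of_pos (inv_pos.2 hipos), hun, mul_one]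
      simp only [hg]
      rw [hxn, hx, smul_smul, inv_inv, mul_inv_cancel₀ hipos.ne', one_smul]
  calc μH[((e+1:ℕ):ℝ)] (Metric.sphere (0 : EuclideanSpace ℝ (Fin (e+2))) 1)
      ≤ μH[((e+1:ℕ):ℝ)] (⋃ (p : Fin (e+2) × Bool), g '' (F p.1 p.2)) := measure_mono hcover
    _ ≤ ∑' (p : Fin (e+2) × Bool), μH[((e+1:ℕ):ℝ)] (g '' (F p.1 p.2)) := measure_iUnion_le _
    _ < ⊤ := by
        rw [tsum_fintype]
        refine ENNReal.sum_lt_top.2 fun p _ => ?_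
        have h1 := (hglip.mono (hFS p.1 p.2)).hausdorffMeasure_image_le hs0
        exact lt_of_le_of_lt h1 (ENNReal.mul_lt_top
          (ENNReal.rpow_lt_top_of_nonneg hs0 ENNReal.coe_ne_top) (hface p.1 p.2))

lemma part_iii (d : ℕ) (hd : 2 ≤ d)
    (H0' D0bar : ℝ → ℝ)
    (hD0ne : ∀ k > (0:ℝ), D0bar k ≠ 0)
    (χ : Fin d → EuclideanSpace ℝ (Fin d) → ℝ)
    (hχ : ∀ (j : Fin d) (k : EuclideanSpace ℝ (Fin d)),
      χ j k = (H0' ‖k‖) ^ 2 * ‖k‖ ^ 2 * (k j / ‖k‖) / (((d : ℝ) - 1) * D0bar ‖k‖))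
    (kk : ℝ) (hkk : 0 < kk) (n m : Fin d) :
    ((μH[(d:ℝ)-1] (Metric.sphere (0 : EuclideanSpace ℝ (Fin d)) 1)).toReal)⁻¹ *
        ∫ u in Metric.sphere (0 : EuclideanSpace ℝ (Fin d)) 1,
          H0' kk * u n * χ m (kk • u) ∂μH[(d:ℝ)-1] =
      (H0' kk) ^ 3 * kk ^ 2 / ((d : ℝ) * ((d : ℝ) - 1) * D0bar kk) *
        (if n = m then (1:ℝ) else 0) := by
  classical
  obtain ⟨e, rfl⟩ : ∃ e, d = e + 2 := ⟨d - 2, by omega⟩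
  have hcast : ((e+2:ℕ):ℝ) - 1 = ((e+1:ℕ):ℝ) := by push_cast; ring
  rw [hcast]
  set s : ℝ := ((e+1:ℕ):ℝ) with hs
  set S : Set (EuclideanSpace ℝ (Fin (e+2))) := Metric.sphere 0 1 with hS
  set μ : Measure (EuclideanSpace ℝ (Fin (e+2))) := μH[s] with hμ
  have hSmeas : MeasurableSet S := Metric.isClosed_sphere.measurableSet
  have hfin : μ S < ⊤ := sphere_hd_fin e
  have hpos : 0 < μ S := sphere_hd_pos e
  have hVpos : 0 < (μ S).toReal := ENNReal.toReal_pos hpos.ne' hfin.ne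
  haveI : IsFiniteMeasure (μ.restrict S) :=
    ⟨by rw [Measure.restrict_apply_univ]; exact hfin⟩
  set C : ℝ := (H0' kk)^3 * kk^2 / ((((e+2:ℕ):ℝ) - 1) * D0bar kk) with hC
  have hintg : Set.EqOn (fun u : EuclideanSpace ℝ (Fin (e+2)) => H0' kk * u n * χ m (kk • u))
      (fun u => C * (u n * u m)) S := by
    intro u hu
    have hun : ‖u‖ = 1 := mem_sphere_zero_iff_norm.1 hu
    have hnorm : ‖(kk • u : EuclideanSpace ℝ (Fin (e+2)))‖ = kk := by
      rw [norm_smul, Real.norm_eq_abs, abs_of_pos hkk, hun, mul_one]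
    have happ : (kk • u) m = kk * u m := rfl
    have hD0 := hD0ne kk hkk
    have hd1 : (((e+2:ℕ):ℝ) - 1) ≠ 0 := by
      have h0 : (0:ℝ) ≤ (e:ℝ) := Nat.cast_nonneg e
      push_cast; intro hcon; linarith
    simp only [hχ, hnorm, happ, hC]
    field_simp
  rw [setIntegral_congr_fun hSmeas hintg, integral_const_mul]
  -- continuity and integrability of coordinate products
  have hcont : ∀ i j : Fin (e+2),
      Continuous (fun u : EuclideanSpace ℝ (Fin (e+2)) => u i * u j) := by
    intro i j
    exact ((continuous_apply i).comp (PiLp.continuous_ofLp 2 _)).mul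
      ((continuous_apply j).comp (PiLp.continuous_ofLp 2 _))
  have hintble : ∀ i j : Fin (e+2),
      Integrable (fun u : EuclideanSpace ℝ (Fin (e+2)) => u i * u j) (μ.restrict S) := by
    intro i j
    refine Integrable.mono' (integrable_const 1) ((hcont i j).aestronglyMeasurable) ?_
    rw [ae_restrict_iff' hSmeas]
    refine Filter.Eventually.of_forall fun u hu => ?_
    have hun : ‖u‖ = 1 := mem_sphere_zero_iff_norm.1 hu
    have h1 : |u i| ≤ 1 := by rw [← hun]; exact abs_coord_le u i
    have h2 : |u j| ≤ 1 := by rw [← hun]; exact abs_coord_le u j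
    rw [Real.norm_eq_abs, abs_mul]
    nlinarith [abs_nonneg (u i), abs_nonneg (u j)]
  rcases eq_or_ne n m with rfl | hnm
  · -- diagonal case
    have hswap : ∀ i : Fin (e+2),
        (∫ u in S, u i * u i ∂μ) = ∫ u in S, u n * u n ∂μ := by
      intro i
      set L := LinearIsometryEquiv.piLpCongrLeft 2 ℝ ℝ (Equiv.swap i n) with hL
      have h := sphere_integral_comp (e+2) s 1 L (fun u => u i * u i)
      rw [hS, h]
      apply setIntegral_congr_fun hSmeas
      intro u hu
      have hLapp : ∀ j, (L u) j = u ((Equiv.swap i n).symm j) := fun j => rfl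
      show (L u) i * (L u) i = u n * u n
      rw [hLapp, Equiv.symm_swap, Equiv.swap_apply_left]
    have hsum : (∑ i : Fin (e+2), ∫ u in S, u i * u i ∂μ) = (μ S).toReal := by
      rw [← integral_finset_sum _ (fun i _ => hintble i i)]
      have hone : Set.EqOn (fun u : EuclideanSpace ℝ (Fin (e+2)) =>
          ∑ i : Fin (e+2), u i * u i) (fun _ => (1:ℝ)) S := by
        intro u hu
        have hun : ‖u‖ = 1 := mem_sphere_zero_iff_norm.1 hu
        have h2 := sum_sq_eq u
        rw [hun, one_pow] at h2
        calc (∑ i : Fin (e+2), u i * u i) = ∑ i : Fin (e+2), (u i)^2 :=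
              Finset.sum_congr rfl fun i _ => (pow_two _).symm
          _ = 1 := h2
      rw [setIntegral_congr_fun hSmeas hone]
      simp [Measure.restrict_apply_univ]
      rfl
    have hsum2 : ((e:ℝ)+2) * (∫ u in S, u n * u n ∂μ) = (μ S).toReal := by
      rw [← hsum, Finset.sum_congr rfl fun i _ => hswap i, Finset.sum_const,
        Finset.card_univ, Fintype.card_fin, nsmul_eq_mul]
      push_cast; ring
    have hInm : (∫ u in S, u n * u n ∂μ) = (μ S).toReal / ((e:ℝ)+2) := by
      have h2 : ((e:ℝ)+2) ≠ 0 := by positivity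
      rw [eq_div_iff h2]
      linarith [hsum2]
    rw [if_pos rfl, hInm, hC]
    have hD0 := hD0ne kk hkk
    have h2 : ((e:ℝ)+2) ≠ 0 := by positivity
    have hd1 : (((e+2:ℕ):ℝ) - 1) ≠ 0 := by
      have h0 : (0:ℝ) ≤ (e:ℝ) := Nat.cast_nonneg e
      push_cast; intro hcon; linarith
    simp only [hs]
    push_cast at hd1 ⊢
    field_simp
    ring_nf
  · -- off-diagonal case
    have hze : (∫ u in S, u n * u m ∂μ) = 0 := by
      set L := LinearIsometryEquiv.piLpCongrRight (𝕜 := ℝ) 2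
        (fun j : Fin (e+2) => if j = n then LinearIsometryEquiv.neg ℝ
          else LinearIsometryEquiv.refl ℝ ℝ) with hL
      have h := sphere_integral_comp (e+2) s 1 L (fun u => u n * u m)
      have hLapp : ∀ (u : EuclideanSpace ℝ (Fin (e+2))) (j),
          (L u) j = if j = n then -(u j) else u j := by
        intro u j
        have h1 : (L u) j = (if j = n then LinearIsometryEquiv.neg ℝ
            else LinearIsometryEquiv.refl ℝ ℝ) (u j) := rfl
        rw [h1, apply_ite (fun T : ℝ ≃ₗᵢ[ℝ] ℝ => T (u j))]
        simp [LinearIsometryEquiv.coe_neg]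
      have hneg : ∀ u : EuclideanSpace ℝ (Fin (e+2)), (L u) n * (L u) m = -(u n * u m) := by
        intro u
        rw [hLapp, hLapp, if_pos rfl, if_neg (Ne.symm hnm)]
        ring
      have h2 : (∫ u in S, u n * u m ∂μ) = ∫ u in S, -(u n * u m) ∂μ := by
        rw [hS, h]
        exact setIntegral_congr_fun hSmeas fun u hu => hneg u
      rw [integral_neg] at h2
      linarith
    rw [hze, if_neg hnm]
    ring


/-- in the isotropic case, with
`D_{mn}(k) = (D̄0(|k|)/H0'(|k|))(δ_{mn} − k_m k_n/|k|²)` and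
`χ_j(k) = H0'(|k|)² |k|² k̂_j/((d−1) D̄0(|k|))`:
(i) `Σ_{m,n} ∂_{k_m}(D_{mn} ∂_{k_n} χ_j) = −H0'(|k|) k̂_j`,
(ii) `χ_j` has zero mean over each sphere `{|k| = const}`, and
(iii) `a_{nm}(k) = (H0'(k)³ k²/(d(d−1)D̄0(k))) δ_{nm}`. -/
theorem stmt_11 (d : ℕ) (hd : 2 ≤ d)
    (H0' D0bar : ℝ → ℝ)
    (hH0' : ContDiffOn ℝ 1 H0' (Set.Ioi 0)) (hD0 : ContDiffOn ℝ 1 D0bar (Set.Ioi 0))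
    (hH0'pos : ∀ k > (0:ℝ), 0 < H0' k) (hD0ne : ∀ k > (0:ℝ), D0bar k ≠ 0)
    (D : Fin d → Fin d → EuclideanSpace ℝ (Fin d) → ℝ)
    (hD : ∀ (m n : Fin d) (k : EuclideanSpace ℝ (Fin d)),
      D m n k = (D0bar ‖k‖ / H0' ‖k‖) *
        ((if m = n then (1:ℝ) else 0) - k m * k n / ‖k‖ ^ 2))
    (χ : Fin d → EuclideanSpace ℝ (Fin d) → ℝ)
    (hχ : ∀ (j : Fin d) (k : EuclideanSpace ℝ (Fin d)),
      χ j k = (H0' ‖k‖) ^ 2 * ‖k‖ ^ 2 * (k j / ‖k‖) / (((d : ℝ) - 1) * D0bar ‖k‖)) :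
    (∀ (j : Fin d) (k : EuclideanSpace ℝ (Fin d)), k ≠ 0 →
      ∑ m : Fin d, fderiv ℝ (fun k' => ∑ n : Fin d,
          D m n k' * fderiv ℝ (χ j) k' (EuclideanSpace.single n 1)) k
        (EuclideanSpace.single m 1) = -(H0' ‖k‖ * (k j / ‖k‖))) ∧
    (∀ (j : Fin d), ∀ ρ > (0:ℝ),
      ∫ u in Metric.sphere (0 : EuclideanSpace ℝ (Fin d)) ρ, χ j u ∂μH[(d:ℝ)-1] = 0) ∧
    (∀ kk > (0:ℝ), ∀ n m : Fin d,
      ((μH[(d:ℝ)-1] (Metric.sphere (0 : EuclideanSpace ℝ (Fin d)) 1)).toReal)⁻¹ *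
        ∫ u in Metric.sphere (0 : EuclideanSpace ℝ (Fin d)) 1,
          H0' kk * u n * χ m (kk • u) ∂μH[(d:ℝ)-1] =
      (H0' kk) ^ 3 * kk ^ 2 / ((d : ℝ) * ((d : ℝ) - 1) * D0bar kk) *
        (if n = m then (1:ℝ) else 0)) := by
  exact ⟨fun j k hk => part_i d hd H0' D0bar hH0' hD0 hH0'pos hD0ne D hD χ hχ j k hk,
    fun j ρ _ => part_ii d H0' D0bar χ hχ j ρ,
    fun kk hkk n m => part_iii d hd H0' D0bar hD0ne χ hχ kk hkk n m⟩
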